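/- arXiv:2011.08250 — 2 statements merged into one kernel-verified Lean document; each statement's English description precedes it below -/
import Mathlib

section
/- Let n ≥ 1, let F and G be n×n real matrices with F invertible, suppose F·𝟏 = −G·𝟏 (where 𝟏 is the all-ones column vector), and let t ≥ 0. Set Λ = exp(t·F) and Ψ = (I − Λ)·(−F)⁻¹. Then (Ψ·G + Λ)·𝟏 = 𝟏. -/
attribute [local instance]
  Matrix.linftyOpNormedAddCommGroup
  Matrix.linftyOpNormedRing
  Matrix.linftyOpNormedAlgebra

open Matrix NormedSpace

/-! `(−F)⁻¹ G` fixes `𝟏` because `G 𝟏 = (−F) 𝟏`, so `Ψ G 𝟏 = (I − Λ) 𝟏`. -/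

namespace Matrix

variable {ι R : Type*} [Fintype ι] [DecidableEq ι] [CommRing R]

theorem nonsing_inv_mulVec_mulVec_of_mulVec_eq {A B : Matrix ι ι R} {v : ι → R}
    (hA : IsUnit A) (h : B *ᵥ v = A *ᵥ v) : A⁻¹ *ᵥ (B *ᵥ v) = v := by
  rw [h, mulVec_mulVec, nonsing_inv_mul _ ((isUnit_iff_isUnit_det A).mp hA), one_mulVec]

theorem sub_mul_nonsing_inv_mul_add_mulVec_of_mulVec_eq {A B : Matrix ι ι R} {v : ι → R}
    (hA : IsUnit A) (h : B *ᵥ v = A *ᵥ v) (Λ : Matrix ι ι R) :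
    ((1 - Λ) * A⁻¹ * B + Λ) *ᵥ v = v := by
  rw [add_mulVec, ← mulVec_mulVec, ← mulVec_mulVec, nonsing_inv_mulVec_mulVec_of_mulVec_eq hA h,
    sub_mulVec, one_mulVec, sub_add_cancel]

end Matrix

theorem block_row_stochastic_general (n : ℕ)
    (F G : Matrix (Fin n) (Fin n) ℝ) (hF : IsUnit F)
    (hFG : F *ᵥ (1 : Fin n → ℝ) = -(G *ᵥ (1 : Fin n → ℝ)))
    (Λ Ψ : Matrix (Fin n) (Fin n) ℝ)
    (hΨ : Ψ = (1 - Λ) * (-F)⁻¹) :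
    (Ψ * G + Λ) *ᵥ (1 : Fin n → ℝ) = 1 := by
  have hG : G *ᵥ (1 : Fin n → ℝ) = (-F) *ᵥ 1 := by rw [neg_mulVec, hFG, neg_neg]
  rw [hΨ]
  exact sub_mul_nonsing_inv_mul_add_mulVec_of_mulVec_eq hF.neg hG Λ

/-- Stochasticity of the block rows of `P^{DTMC}`: if `F·𝟏 = −G·𝟏` and `F` is invertible
then, with `Λ = e^{tF}` and `Ψ = (I − Λ)(−F)⁻¹`, one has `(Ψ G + Λ)·𝟏 = 𝟏`. -/
theorem block_row_stochastic (n : ℕ) (hn : 1 ≤ n)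
    (F G : Matrix (Fin n) (Fin n) ℝ) (hF : IsUnit F)
    (hFG : F *ᵥ (1 : Fin n → ℝ) = -(G *ᵥ (1 : Fin n → ℝ)))
    (t : ℝ) (ht : 0 ≤ t)
    (Λ Ψ : Matrix (Fin n) (Fin n) ℝ)
    (hΛ : Λ = exp (t • F)) (hΨ : Ψ = (1 - Λ) * (-F)⁻¹) :
    (Ψ * G + Λ) *ᵥ (1 : Fin n → ℝ) = 1 :=
  block_row_stochastic_general n F G hF hFG Λ Ψ hΨ
end

section
/- Let S > 1 and 0 < f < 1 be real numbers, set f̄ = 1 − f, and define μ₁ = (S + (4f − 1) + √((S−1)(S−1+8f f̄)))/(2f(S+1)), μ₂ = (S + (4f − 1) − √((S−1)(S−1+8f f̄)))/(2f(S+1)), and p = μ₁ f. Then μ₂ < 1 < μ₁ and 0 < p < 1. -/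
/-- For the hyperexponential fitting formulas of Section 4.6 one has `μ₂ < 1 < μ₁`
and `0 < p < 1`, so the type-2 jobs are longer on average and `p` is a valid
mixing probability. -/
theorem hexp_fitting_bounds (S f : ℝ) (hS : 1 < S) (hf0 : 0 < f) (hf1 : f < 1)
    (fbar : ℝ) (hfbar : fbar = 1 - f)
    (μ₁ μ₂ p : ℝ)
    (hμ₁ : μ₁ = (S + (4 * f - 1) + Real.sqrt ((S - 1) * (S - 1 + 8 * f * fbar)))
        / (2 * f * (S + 1)))
    (hμ₂ : μ₂ = (S + (4 * f - 1) - Real.sqrt ((S - 1) * (S - 1 + 8 * f * fbar)))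
        / (2 * f * (S + 1)))
    (hp : p = μ₁ * f) :
    μ₂ < 1 ∧ 1 < μ₁ ∧ 0 < p ∧ p < 1 := by
  subst hfbar
  set D := Real.sqrt ((S - 1) * (S - 1 + 8 * f * (1 - f))) with hDdef
  have h1 : (0:ℝ) < S - 1 := by linarith
  have h2 : (0:ℝ) < S - 1 + 8 * f * (1 - f) := by nlinarith
  have hprod : (0:ℝ) < 4 * f * (1 - f) * (S + 1) * (S - 1) := by
    have : (0:ℝ) < 1 - f := by linarith
    have : (0:ℝ) < S + 1 := by linarith
    positivity
  have harg : 0 ≤ (S - 1) * (S - 1 + 8 * f * (1 - f)) := le_of_lt (mul_pos h1 h2)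
  have hD2 : D ^ 2 = (S - 1) * (S - 1 + 8 * f * (1 - f)) := Real.sq_sqrt harg
  have hD0 : 0 ≤ D := Real.sqrt_nonneg _
  have hden : 0 < 2 * f * (S + 1) := by nlinarith
  -- key lower bound: D > (S-1)(2f-1)
  have hkey : (S - 1) * (2 * f - 1) < D := by
    nlinarith [hprod, mul_nonneg hD0 hD0]
  -- key upper bound: D < S + 3 - 4f
  have hub : D < S + 3 - 4 * f := by
    nlinarith [hprod, mul_nonneg hD0 hD0, sq_nonneg (1 - f)]
  have hμ1gt : 1 < μ₁ := by
    rw [hμ₁, lt_div_iff₀ hden]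
    nlinarith
  have hμ2lt : μ₂ < 1 := by
    rw [hμ₂, div_lt_one hden]
    nlinarith
  refine ⟨hμ2lt, hμ1gt, ?_, ?_⟩
  · rw [hp]; positivity
  · rw [hp, hμ₁, div_mul_eq_mul_div, div_lt_one hden]
    nlinarith
end
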